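/- Let h ∈ L¹(a,b) with h > 0 a.e. on (a,b). For every measurable J ⊆ (a,b) with m(J) > 0, there is a measurable J₀ ⊆ J with m(J \ J₀) = 0 such that for all τ₀ ∈ J₀: lim_{t→τ₀⁺} (∫_{[τ₀,t]∩J} h ds)/(∫_{τ₀}^{t} h ds) = 1 and lim_{t→τ₀⁻} (∫_{[t,τ₀]∩J} h ds)/(∫_{t}^{τ₀} h ds) = 1. -/

import Mathlib

/-!
Let `F` and `G` be the indefinite integrals of `𝟙_J h` and `h` on `(a, b)`. By the Lebesgue
differentiation theorem, at almost every `τ₀ ∈ J` both are differentiable with `F' = G' = h τ₀`,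
and `h τ₀ > 0`. At such a point the quotient of increments `(F t - F τ₀) / (G t - G τ₀)` is the
quotient of the two difference quotients, so it tends to `h τ₀ / h τ₀ = 1` from either side.
-/

open Set Filter MeasureTheory intervalIntegral

open scoped Topology

theorem HasDerivAt.tendsto_sub_div_sub {𝕜 : Type*} [NontriviallyNormedField 𝕜]
    {F G : 𝕜 → 𝕜} {f' g' x : 𝕜} (hF : HasDerivAt F f' x) (hG : HasDerivAt G g' x)
    (hg' : g' ≠ 0) :
    Tendsto (fun t => (F t - F x) / (G t - G x)) (𝓝[≠] x) (𝓝 (f' / g')) := by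
  refine ((hasDerivAt_iff_tendsto_slope.1 hF).div (hasDerivAt_iff_tendsto_slope.1 hG) hg').congr'
    ?_
  filter_upwards [self_mem_nhdsWithin] with t ht
  rw [Pi.div_apply, slope_def_field, slope_def_field, div_div_div_cancel_right₀ (sub_ne_zero.2 ht)]

theorem intervalIntegral_indicator_eq_setIntegral_Icc_inter {f : ℝ → ℝ} {J : Set ℝ}
    (hJ : MeasurableSet J) {u w : ℝ} (huw : u ≤ w) :
    ∫ s in u..w, J.indicator f s = ∫ s in Icc u w ∩ J, f s := by
  rw [integral_of_le huw, ← integral_Icc_eq_integral_Ioc, setIntegral_indicator hJ]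

theorem ae_tendsto_intervalIntegral_indicator_div {a b : ℝ} (hab : a ≤ b) {h : ℝ → ℝ}
    (hh : IntegrableOn h (Ioo a b)) {J : Set ℝ} (hJ : MeasurableSet J) :
    ∀ᵐ τ₀, τ₀ ∈ Ioo a b → h τ₀ ≠ 0 → τ₀ ∈ J →
      Tendsto (fun t => (∫ s in τ₀..t, J.indicator h s) / ∫ s in τ₀..t, h s)
        (𝓝[≠] τ₀) (𝓝 1) := by
  have hF := ((intervalIntegrable_iff_integrableOn_Ioo_of_le hab).2
    (hh.indicator hJ)).ae_hasDerivAt_integral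
  have hG := ((intervalIntegrable_iff_integrableOn_Ioo_of_le hab).2 hh).ae_hasDerivAt_integral
  filter_upwards [hF, hG] with τ₀ hFτ hGτ hτ hhτ hτJ
  have hτ' : τ₀ ∈ uIcc a b := Ioo_subset_Icc_self.trans Icc_subset_uIcc hτ
  have key := (hFτ hτ' τ₀ hτ').tendsto_sub_div_sub (hGτ hτ' τ₀ hτ') hhτ
  simpa only [integral_same, sub_zero, indicator_of_mem hτJ, div_self hhτ] using key

theorem stmt13_general (a b : ℝ) (hab : a < b) (h : ℝ → ℝ)
    (hh : IntegrableOn h (Ioo a b))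
    (hh0 : ∀ᵐ s ∂volume.restrict (Ioo a b), 0 < h s)
    (J : Set ℝ) (hJ : MeasurableSet J) (hJsub : J ⊆ Ioo a b) :
    ∃ J₀ ⊆ J, MeasurableSet J₀ ∧ volume (J \ J₀) = 0 ∧
      ∀ τ₀ ∈ J₀,
        Tendsto (fun t => (∫ s in Icc τ₀ t ∩ J, h s) / ∫ s in τ₀..t, h s)
          (nhdsWithin τ₀ (Ioi τ₀)) (nhds 1) ∧
        Tendsto (fun t => (∫ s in Icc t τ₀ ∩ J, h s) / ∫ s in t..τ₀, h s)
          (nhdsWithin τ₀ (Iio τ₀)) (nhds 1) := by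
  have hgood := ae_tendsto_intervalIntegral_indicator_div hab.le hh hJ
  rw [ae_restrict_iff' measurableSet_Ioo] at hh0
  obtain ⟨S, hS, hSm, hSgood⟩ := (hgood.and hh0).exists_measurable_mem
  refine ⟨J ∩ S, inter_subset_left, hJ.inter hSm, ?_, fun τ₀ ⟨hτJ, hτS⟩ => ?_⟩
  · rw [sdiff_self_inter]
    exact measure_mono_null (sdiff_subset_compl _ _) (mem_ae_iff.1 hS)
  have hτ := hJsub hτJ
  have hlim := (hSgood τ₀ hτS).1 hτ ((hSgood τ₀ hτS).2 hτ).ne' hτJ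
  constructor
  · refine (hlim.mono_left (nhdsGT_le_nhdsNE τ₀)).congr' ?_
    filter_upwards [self_mem_nhdsWithin] with t ht
    rw [intervalIntegral_indicator_eq_setIntegral_Icc_inter hJ (le_of_lt ht)]
  · refine (hlim.mono_left (nhdsLT_le_nhdsNE τ₀)).congr' ?_
    filter_upwards [self_mem_nhdsWithin] with t ht
    rw [← intervalIntegral_indicator_eq_setIntegral_Icc_inter hJ (le_of_lt ht),
      integral_symm τ₀ t, integral_symm τ₀ t, neg_div_neg_eq]

theorem stmt13 (a b : ℝ) (hab : a < b) (h : ℝ → ℝ)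
    (hh : IntegrableOn h (Ioo a b))
    (hh0 : ∀ᵐ s ∂volume.restrict (Ioo a b), 0 < h s)
    (J : Set ℝ) (hJ : MeasurableSet J) (hJsub : J ⊆ Ioo a b)
    (hJpos : 0 < volume J) :
    ∃ J₀ ⊆ J, MeasurableSet J₀ ∧ volume (J \ J₀) = 0 ∧
      ∀ τ₀ ∈ J₀,
        Tendsto (fun t => (∫ s in Icc τ₀ t ∩ J, h s) / ∫ s in τ₀..t, h s)
          (nhdsWithin τ₀ (Ioi τ₀)) (nhds 1) ∧
        Tendsto (fun t => (∫ s in Icc t τ₀ ∩ J, h s) / ∫ s in t..τ₀, h s)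
          (nhdsWithin τ₀ (Iio τ₀)) (nhds 1) :=
  stmt13_general a b hab h hh hh0 J hJ hJsub
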